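/- arXiv:1507.00286 — 2 statements merged into one kernel-verified Lean document; each statement's English description precedes it below -/
import Mathlib

section
/- Let γ = (r₁e_{i₁}) * ⋯ * (r_n e_{i_n}) be an axis path in ℝ^d with all r_k ≠ 0 and i_k ≠ i_{k+1} for k = 1,…,n−1, let w* = (i₁,…,i_n), and for k = 1,…,n let w*_k = (i₁,…,i_{k−1}, i_k, i_k, i_{k+1},…,i_n) be the word of length n+1 obtained from w* by repeating the k-th letter. Then the signature coefficients satisfy C_γ(w*_k) = (1/2) r₁ ⋯ r_{k−1} r_k² r_{k+1} ⋯ r_n, and consequently r_k = 2 C_γ(w*_k) / C_γ(w*); thus the axis path γ is completely reconstructed from its signature coefficients. -/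
/-!
On its `k`-th unit time interval the axis path moves with constant velocity `r_k e_{i_k}`, so the
signature of that piece at a word `w` is `∏ (r_k e_{i_k})_{w_l} / |w|!`, which vanishes unless `w`
is a power of `i_k`. Chen's identity at the integer times writes the signature over the remaining
pieces as a sum over ways to hand the word out to them, each piece taking one (possibly empty) run
of equal letters; so it vanishes once the word has more runs than there are pieces. For a stuttered
word `i₁^{a₁} ⋯ i_n^{a_n}` with all `a_k ≥ 1` and adjacent `i_k` distinct, only the distribution
into its `n` blocks survives, giving `∏ r_k^{a_k} / a_k!`. The words `w*` and `w*_k` are the cases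
`a ≡ 1` and `a = 1 + δ_k`, and `C_γ(w*) = ∏ r_k ≠ 0` makes the quotient recover `r_k`.
-/

open MeasureTheory

/-- The signature coefficient of a path with (a.e.) derivative `D` over the time
interval `[s, t]`, at the word given as a list of letters in `Fin d`. -/
noncomputable def sigCoeff {d : ℕ} (D : ℝ → Fin d → ℝ) : List (Fin d) → ℝ → ℝ → ℝ
  | [], _, _ => 1
  | j :: w, s, t => ∫ u in s..t, D u j * sigCoeff D w u t

/-- The derivative of the axis path `(r₁ e_{i₁}) * ⋯ * (r_n e_{i_n})` parametrized on
`[0, n]`: on the interval `(k-1, k)` it equals `r_k e_{i_k}`. -/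
noncomputable def axisDeriv {d n : ℕ} (r : Fin n → ℝ) (i : Fin n → Fin d) (u : ℝ)
    (j : Fin d) : ℝ :=
  ∑ k : Fin n, if (k : ℝ) < u ∧ u < (k : ℝ) + 1 ∧ i k = j then r k else 0

namespace sigCoeff

variable {d : ℕ} {D : ℝ → Fin d → ℝ}

theorem continuous_start (hD : ∀ j a b, IntervalIntegrable (fun u => D u j) volume a b) :
    ∀ (w : List (Fin d)) (t : ℝ), Continuous fun s => sigCoeff D w s t
  | [], _ => continuous_const
  | j :: w, t => by
    have h := (intervalIntegral.continuous_primitive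
      (fun a b => (hD j a b).mul_continuousOn (continuous_start hD w t).continuousOn) t).neg
    refine h.congr fun s => ?_
    rw [sigCoeff, intervalIntegral.integral_symm, Pi.neg_apply]

theorem intervalIntegrable_integrand
    (hD : ∀ j a b, IntervalIntegrable (fun u => D u j) volume a b) (j : Fin d) (w : List (Fin d)) (t a b : ℝ) :
    IntervalIntegrable (fun u => D u j * sigCoeff D w u t) volume a b :=
  (hD j a b).mul_continuousOn (continuous_start hD w t).continuousOn

theorem of_const {s t : ℝ} (hst : s ≤ t) (c : Fin d → ℝ)
    (hc : ∀ u ∈ Set.Ioo s t, D u = c) (w : List (Fin d)) :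
    sigCoeff D w s t = (w.map c).prod * (t - s) ^ w.length / w.length.factorial := by
  induction w generalizing s with
  | nil => simp [sigCoeff]
  | cons j w ih =>
    have key : ∀ u ∈ Set.Ioo s t, D u j * sigCoeff D w u t
        = c j * (w.map c).prod / w.length.factorial * (t - u) ^ w.length := fun u hu => by
      rw [hc u hu, ih hu.2.le fun v hv => hc v ⟨hu.1.trans hv.1, hv.2⟩]
      ring
    have hpow : ∫ u in s..t, (t - u) ^ w.length = (t - s) ^ (w.length + 1) / (w.length + 1) := by
      simp [intervalIntegral.integral_comp_sub_left fun x => x ^ w.length]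
    rw [sigCoeff, intervalIntegral.integral_of_le hst, integral_Ioc_eq_integral_Ioo,
      setIntegral_congr_fun measurableSet_Ioo key, ← integral_Ioc_eq_integral_Ioo,
      ← intervalIntegral.integral_of_le hst, intervalIntegral.integral_const_mul, hpow]
    simp only [List.map_cons, List.prod_cons, List.length_cons, Nat.factorial_succ]
    push_cast
    field_simp

theorem chen (hD : ∀ j a b, IntervalIntegrable (fun u => D u j) volume a b)
    (w : List (Fin d)) (s m t : ℝ) :
    sigCoeff D w s t = ∑ p ∈ Finset.range (w.length + 1),
      sigCoeff D (w.take p) s m * sigCoeff D (w.drop p) m t := by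
  induction w generalizing s m t with
  | nil => simp [sigCoeff]
  | cons j w ih =>
    have hfirst : ∫ u in s..m, D u j * sigCoeff D w u t
        = ∑ p ∈ Finset.range (w.length + 1),
            sigCoeff D (j :: w.take p) s m * sigCoeff D (w.drop p) m t := by
      simp_rw [ih _ m t, Finset.mul_sum, ← mul_assoc]
      rw [intervalIntegral.integral_finsetSum fun p _ =>
        (intervalIntegrable_integrand hD j _ m s m).mul_const _]
      simp_rw [intervalIntegral.integral_mul_const]
      rfl
    -- Split `∫ s..t` at `m`: the `[m, t]` part is the `p = 0` term.
    rw [sigCoeff, ← intervalIntegral.integral_add_adjacent_intervals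
      (intervalIntegrable_integrand hD j w t s m) (intervalIntegrable_integrand hD j w t m t),
      hfirst, List.length_cons, Finset.sum_range_succ' _ (w.length + 1)]
    simp [sigCoeff]

end sigCoeff

namespace List

variable {α : Type*} {n : ℕ}

theorem drop_ofFn_eq_cons (f : Fin n → α) {m : ℕ} (hm : m < n) :
    (ofFn f).drop m = f ⟨m, hm⟩ :: (ofFn f).drop (m + 1) := by
  rw [drop_eq_getElem_cons (by simpa using hm), List.getElem_ofFn]

theorem flatten_ofFn_replicate_one (i : Fin n → α) :
    (ofFn fun k => replicate 1 (i k)).flatten = ofFn i := by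
  rw [← flatMap_singleton' (ofFn i), flatMap_def, map_ofFn]
  rfl

theorem flatten_ofFn_replicate_ite (i : Fin n → α) (k : Fin n) :
    (ofFn fun j => replicate (if j = k then 2 else 1) (i j)).flatten =
      (ofFn i).take (k + 1) ++ (ofFn i).drop k := by
  have hblocks : (ofFn fun j => replicate (if j = k then 2 else 1) (i j)) =
      ((ofFn i).map fun x => [x]).set k [i k, i k] := by
    refine ext_getElem (by simp) fun t h₁ h₂ => ?_
    simp only [getElem_set, getElem_map, List.getElem_ofFn]
    by_cases hkt : (k : ℕ) = t
    · subst hkt; simp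
    · simp [hkt, Fin.ext_iff, Ne.symm hkt]
  rw [hblocks, set_eq_take_append_cons_drop, if_pos (by simp), flatten_append, flatten_cons,
    ← map_take, ← map_drop, ← flatMap_def, ← flatMap_def, flatMap_singleton',
    flatMap_singleton', take_add_one, drop_ofFn_eq_cons i k.isLt]
  simp

variable [DecidableEq α]

def runCount (l : List α) : ℕ := (l.destutter (· ≠ ·)).length

theorem runCount_nil : runCount ([] : List α) = 0 := rfl

theorem runCount_cons (a : α) (l : List α) :
    runCount (a :: l) = runCount l + if l.head? = some a then 0 else 1 := by
  cases l with
  | nil => rfl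
  | cons b l =>
    simp only [runCount, head?_cons, Option.some.injEq, destutter_cons']
    by_cases hab : a = b
    · subst hab; simp
    · simp [hab, Ne.symm hab]

theorem runCount_cons_le (a : α) (l : List α) : runCount (a :: l) ≤ runCount l + 1 := by
  rw [runCount_cons]; split <;> omega

theorem runCount_replicate_append {p : ℕ} (hp : p ≠ 0) (a : α) (l : List α) :
    runCount (replicate p a ++ l) = runCount (a :: l) := by
  induction p with
  | zero => exact absurd rfl hp
  | succ p ih =>
    rcases eq_or_ne p 0 with rfl | hp'
    · rfl
    · rw [replicate_succ, cons_append, runCount_cons, head?_append, head?_replicate, if_neg hp',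
        ih hp']
      simp

theorem runCount_replicate_append_le (p : ℕ) (a : α) (l : List α) :
    runCount (replicate p a ++ l) ≤ runCount l + 1 := by
  rcases eq_or_ne p 0 with rfl | hp
  · simp
  · rw [runCount_replicate_append hp]; exact runCount_cons_le a l

end List

open List

section axisDeriv

variable {d n : ℕ} (r : Fin n → ℝ) (i : Fin n → Fin d)

theorem intervalIntegrable_axisDeriv (j : Fin d) (a b : ℝ) :
    IntervalIntegrable (fun u => axisDeriv r i u j) volume a b := by
  have hterm (k : Fin n) : IntervalIntegrable
      (fun u => if (k : ℝ) < u ∧ u < k + 1 ∧ i k = j then r k else 0) volume a b := by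
    refine (intervalIntegrable_const (c := r k)).mono_fun
      (Measurable.ite (by measurability) measurable_const measurable_const).aestronglyMeasurable ?_
    filter_upwards with u
    split_ifs <;> simp
  have h := IntervalIntegrable.sum Finset.univ fun k _ => hterm k
  rwa [Finset.sum_fn] at h

theorem axisDeriv_of_mem_Ioo (m : Fin n) {u : ℝ} (hu : u ∈ Set.Ioo (m : ℝ) (m + 1)) :
    axisDeriv r i u = Pi.single (i m) (r m) := by
  funext j
  rw [axisDeriv, Finset.sum_eq_single m, Pi.single_apply]
  · simp [hu.1, hu.2, eq_comm]
  · rintro k - hkm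
    rw [if_neg]
    rintro ⟨hk₁, hk₂, -⟩
    have h₁ : ((k : ℕ) : ℝ) < (m : ℕ) + 1 := hk₁.trans hu.2
    have h₂ : ((m : ℕ) : ℝ) < (k : ℕ) + 1 := hu.1.trans hk₂
    norm_cast at h₁ h₂
    exact hkm (Fin.ext (by omega))
  · simp

theorem sigCoeff_axisDeriv_piece (m : Fin n) (w : List (Fin d)) :
    sigCoeff (axisDeriv r i) w m (m + 1) =
      (w.map (Pi.single (i m) (r m))).prod / w.length.factorial := by
  rw [sigCoeff.of_const (by linarith) _ fun u hu => axisDeriv_of_mem_Ioo r i m hu]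
  simp

theorem sigCoeff_axisDeriv_piece_eq_zero (m : Fin n) {w : List (Fin d)}
    (hw : ∃ x ∈ w, x ≠ i m) : sigCoeff (axisDeriv r i) w m (m + 1) = 0 := by
  obtain ⟨x, hx, hxm⟩ := hw
  rw [sigCoeff_axisDeriv_piece, List.prod_eq_zero, zero_div]
  exact List.mem_map.mpr ⟨x, hx, Pi.single_eq_of_ne hxm _⟩

theorem sigCoeff_axisDeriv_piece_replicate (m : Fin n) (p : ℕ) :
    sigCoeff (axisDeriv r i) (replicate p (i m)) m (m + 1) = r m ^ p / p.factorial := by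
  simp [sigCoeff_axisDeriv_piece]

theorem sigCoeff_axisDeriv_eq_zero_of_lt_runCount {m : ℕ} (hm : m ≤ n) {w : List (Fin d)}
    (hw : n - m < w.runCount) : sigCoeff (axisDeriv r i) w m n = 0 := by
  induction h : n - m generalizing m w with
  | zero =>
    obtain rfl : m = n := by omega
    cases w with
    | nil => simp [runCount_nil] at hw
    | cons j w => exact intervalIntegral.integral_same
  | succ t ih =>
    have hmn : m < n := by omega
    set m' : Fin n := ⟨m, hmn⟩
    rw [sigCoeff.chen (intervalIntegrable_axisDeriv r i) w _ ((m + 1 : ℕ) : ℝ)]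
    refine Finset.sum_eq_zero fun p _ => ?_
    by_cases hconst : ∀ x ∈ w.take p, x = i m'
    · have hsplit : replicate (w.take p).length (i m') ++ w.drop p = w := by
        rw [← eq_replicate_of_mem hconst, take_append_drop]
      have hrun := runCount_replicate_append_le (w.take p).length (i m') (w.drop p)
      rw [hsplit] at hrun
      rw [ih hmn (by omega) (by omega), mul_zero]
    · push Not at hconst
      rw [Nat.cast_succ, sigCoeff_axisDeriv_piece_eq_zero r i m' hconst, zero_mul]

theorem sigCoeff_axisDeriv_replicate_append (m : Fin n) (p : ℕ)
    {w : List (Fin d)} (hw : w.head? ≠ some (i m)) (hrun : n - (m + 1) ≤ w.runCount) :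
    sigCoeff (axisDeriv r i) (replicate p (i m) ++ w) m n =
      r m ^ p / p.factorial * sigCoeff (axisDeriv r i) w ((m + 1 : ℕ) : ℝ) n := by
  rw [sigCoeff.chen (intervalIntegrable_axisDeriv r i) _ _ ((m + 1 : ℕ) : ℝ),
    Finset.sum_eq_single p]
  · rw [take_left' length_replicate, drop_left' length_replicate, Nat.cast_succ,
      sigCoeff_axisDeriv_piece_replicate]
  · -- For `q < p` the rest has one run too many; for `q > p` the first piece meets `w.head`.
    intro q hq hqp
    rcases lt_or_gt_of_ne hqp with hlt | hgt
    · have hdrop : (replicate p (i m) ++ w).drop q = replicate (p - q) (i m) ++ w := by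
        rw [drop_append_of_le_length (by simp [hlt.le]), drop_replicate]
      rw [hdrop, sigCoeff_axisDeriv_eq_zero_of_lt_runCount r i (by omega), mul_zero]
      rw [runCount_replicate_append (by omega), runCount_cons, if_neg hw]
      omega
    · obtain ⟨x, w', rfl⟩ : ∃ x w', w = x :: w' := by
        refine ne_nil_iff_exists_cons.mp fun hnil => ?_
        simp [hnil] at hq
        omega
      refine mul_eq_zero_of_left ?_ _
      rw [Nat.cast_succ]
      refine sigCoeff_axisDeriv_piece_eq_zero r i m ⟨x, ?_, by simpa using hw⟩
      rw [take_append, take_of_length_le (by simp [hgt.le])]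
      obtain ⟨q', rfl⟩ : ∃ q', q = p + (q' + 1) := ⟨q - p - 1, by omega⟩
      simp
  · simp

end axisDeriv

section stutter

variable {d n : ℕ} (r : Fin n → ℝ) {i : Fin n → Fin d} {a : Fin n → ℕ}

theorem head?_flatten_drop_blocks_ne (ha : ∀ k, a k ≠ 0)
    (hi : ∀ (k : Fin n) (h : (k : ℕ) + 1 < n), i k ≠ i ⟨k + 1, h⟩) (m : Fin n) :
    ((ofFn fun k => replicate (a k) (i k)).drop (m + 1)).flatten.head? ≠ some (i m) := by
  by_cases hm : (m : ℕ) + 1 < n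
  · rw [drop_ofFn_eq_cons _ hm, flatten_cons, head?_append, head?_replicate, if_neg (ha _)]
    simpa using (hi m hm).symm
  · rw [drop_eq_nil_of_le (by simpa using hm)]
    simp

theorem runCount_flatten_drop_blocks (ha : ∀ k, a k ≠ 0)
    (hi : ∀ (k : Fin n) (h : (k : ℕ) + 1 < n), i k ≠ i ⟨k + 1, h⟩)
    {m : ℕ} (hm : m ≤ n) :
    ((ofFn fun k => replicate (a k) (i k)).drop m).flatten.runCount = n - m := by
  induction h : n - m generalizing m with
  | zero =>
    rw [drop_eq_nil_of_le (by simp; omega)]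
    rfl
  | succ t ih =>
    have hmn : m < n := by omega
    rw [drop_ofFn_eq_cons _ hmn, flatten_cons, runCount_replicate_append (ha _), runCount_cons,
      if_neg (head?_flatten_drop_blocks_ne ha hi ⟨m, hmn⟩), ih hmn (by omega)]

theorem sigCoeff_axisDeriv_flatten_drop_blocks (ha : ∀ k, a k ≠ 0)
    (hi : ∀ (k : Fin n) (h : (k : ℕ) + 1 < n), i k ≠ i ⟨k + 1, h⟩)
    {m : ℕ} (hm : m ≤ n) :
    sigCoeff (axisDeriv r i) ((ofFn fun k => replicate (a k) (i k)).drop m).flatten m n =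
      ((ofFn fun k => r k ^ a k / (a k).factorial).drop m).prod := by
  induction h : n - m generalizing m with
  | zero =>
    obtain rfl : m = n := by omega
    rw [drop_eq_nil_of_le (by simp), drop_eq_nil_of_le (by simp)]
    rfl
  | succ t ih =>
    have hmn : m < n := by omega
    rw [drop_ofFn_eq_cons _ hmn, flatten_cons, drop_ofFn_eq_cons _ hmn, prod_cons,
      ← ih hmn (by omega)]
    exact sigCoeff_axisDeriv_replicate_append r i ⟨m, hmn⟩ _
      (head?_flatten_drop_blocks_ne ha hi ⟨m, hmn⟩)
      (runCount_flatten_drop_blocks ha hi hmn).ge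

theorem sigCoeff_axisDeriv_flatten_blocks (ha : ∀ k, a k ≠ 0)
    (hi : ∀ (k : Fin n) (h : (k : ℕ) + 1 < n), i k ≠ i ⟨k + 1, h⟩) :
    sigCoeff (axisDeriv r i) (ofFn fun k => replicate (a k) (i k)).flatten 0 n =
      ∏ k, r k ^ a k / (a k).factorial := by
  simpa only [drop_zero, prod_ofFn, Nat.cast_zero] using
    sigCoeff_axisDeriv_flatten_drop_blocks r ha hi (Nat.zero_le n)

end stutter

/-- For the axis path `γ = (r₁ e_{i₁}) * ⋯ * (r_n e_{i_n})` (with all `r_k ≠ 0` and adjacent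
directions distinct), let `w* = (i₁, …, i_n)` and let `w*_k` be the word of length `n+1`
obtained from `w*` by repeating the `k`-th letter.  Then
`C_γ(w*_k) = ½ r₁ ⋯ r_{k-1} r_k² r_{k+1} ⋯ r_n`, and consequently
`r_k = 2 C_γ(w*_k) / C_γ(w*)`: the axis path is reconstructed from its signature. -/
theorem axis_path_reconstruction
    {d n : ℕ} (r : Fin n → ℝ) (i : Fin n → Fin d)
    (hr : ∀ k, r k ≠ 0)
    (hi : ∀ (k : ℕ) (h : k + 1 < n), i ⟨k, by omega⟩ ≠ i ⟨k + 1, h⟩)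
    (k : Fin n) :
    sigCoeff (axisDeriv r i) ((List.ofFn i).take (k + 1) ++ (List.ofFn i).drop k) 0 n
        = (1 / 2) * r k * ∏ j, r j ∧
      r k = 2 * sigCoeff (axisDeriv r i)
              ((List.ofFn i).take (k + 1) ++ (List.ofFn i).drop k) 0 n
            / sigCoeff (axisDeriv r i) (List.ofFn i) 0 n := by
  have hword : sigCoeff (axisDeriv r i) (List.ofFn i) 0 n = ∏ j, r j := by
    rw [← flatten_ofFn_replicate_one,
      sigCoeff_axisDeriv_flatten_blocks r (a := fun _ => 1) (fun _ => one_ne_zero) fun k => hi k]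
    simp
  have hdoubled : sigCoeff (axisDeriv r i)
      ((List.ofFn i).take (k + 1) ++ (List.ofFn i).drop k) 0 n = (1 / 2) * r k * ∏ j, r j := by
    rw [← flatten_ofFn_replicate_ite,
      sigCoeff_axisDeriv_flatten_blocks r (fun j => by split_ifs <;> norm_num) fun k => hi k]
    calc ∏ j, r j ^ (if j = k then 2 else 1) / (if j = k then 2 else 1).factorial
        = ∏ j, r j * if j = k then r k / 2 else 1 :=
          Finset.prod_congr rfl fun j _ => by split_ifs with h <;> simp [h, sq, mul_div_assoc]
      _ = (1 / 2) * r k * ∏ j, r j := by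
          rw [Finset.prod_mul_distrib, Finset.prod_ite_eq']
          simp only [Finset.mem_univ, if_true]
          ring
  refine ⟨hdoubled, ?_⟩
  rw [hdoubled, hword]
  field_simp [Finset.prod_ne_zero_iff.mpr fun j _ => hr j]
end

section
/- Assume L = 1 and write f_λ = η_λ − θ. Then for every λ > 0 and every t ∈ (0,1], the differential inequality (d/dt)|f_λ(t)|² ≤ 2 |f_λ(t)| ( −λ |f_λ(t)| (1 − |f_λ(t)|) + sup_{s∈[0,1]}|θ′(s)| ) holds. -/
/-!
Write `f = η - θ` and `c = ⟪θ, η⟫`. Along the development `f' = K (θ - c η) - θ'` with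
`K = λ coth ρ ≥ λ`. For unit vectors `⟪η - θ, θ - c η⟫ = c² - 1 ≤ 0`, and since
`c = 1 - |f|²/2` with `|f| ≤ 2`, `c² - 1 = -|f|² (1 - |f|²/4) ≤ -|f|² (1 - |f|)`; the `θ'` term is
handled by Cauchy–Schwarz.
-/

open Real Set
open scoped RealInnerProductSpace

theorem IsCompact.le_biSup_of_continuousOn {X : Type*} [TopologicalSpace X] {s : Set X}
    {f : X → ℝ} {x : X} (hs : IsCompact s) (hf : ContinuousOn f s) (hx : x ∈ s) :
    f x ≤ ⨆ y ∈ s, f y :=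
  le_ciSup₂ (f := fun y (_ : y ∈ s) => f y)
    ((hs.bddAbove_image hf).mono (by rintro _ ⟨_, ⟨y, rfl⟩, hy, rfl⟩; exact ⟨y, hy, rfl⟩)) x hx

theorem Real.one_le_cosh_div_sinh {x : ℝ} (hx : 0 < x) : 1 ≤ cosh x / sinh x :=
  (one_le_div (sinh_pos_iff.mpr hx)).mpr (sinh_lt_cosh x).le

section UnitVectors

variable {E : Type*} [NormedAddCommGroup E] [InnerProductSpace ℝ E] {u v : E}

theorem inner_eq_one_sub_norm_sub_sq_div_two (hu : ‖u‖ = 1) (hv : ‖v‖ = 1) :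
    ⟪v, u⟫ = 1 - ‖u - v‖ ^ 2 / 2 := by
  rw [norm_sub_sq_real, hu, hv, real_inner_comm]; ring

theorem inner_sub_sub_inner_smul_of_norm_eq_one (hu : ‖u‖ = 1) (hv : ‖v‖ = 1) :
    ⟪u - v, v - ⟪v, u⟫ • u⟫ = ⟪v, u⟫ ^ 2 - 1 := by
  have huu : ⟪u, u⟫ = 1 := by rw [real_inner_self_eq_norm_sq, hu, one_pow]
  have hvv : ⟪v, v⟫ = 1 := by rw [real_inner_self_eq_norm_sq, hv, one_pow]
  simp only [inner_sub_left, inner_sub_right, inner_smul_right, huu, hvv, real_inner_comm u v]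
  ring

theorem inner_sq_sub_one_le (hu : ‖u‖ = 1) (hv : ‖v‖ = 1) :
    ⟪v, u⟫ ^ 2 - 1 ≤ -(‖u - v‖ ^ 2 * (1 - ‖u - v‖)) := by
  have hr : ‖u - v‖ ≤ 2 := (norm_sub_le u v).trans_eq (by rw [hu, hv]; norm_num)
  rw [inner_eq_one_sub_norm_sub_sq_div_two hu hv]
  nlinarith [pow_nonneg (norm_nonneg (u - v)) 3]

theorem inner_sub_development_field_le {K lam M : ℝ} {w : E} (hu : ‖u‖ = 1) (hv : ‖v‖ = 1)
    (hlam : 0 ≤ lam) (hK : lam ≤ K) (hw : ‖w‖ ≤ M) :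
    ⟪u - v, K • (v - ⟪v, u⟫ • u) - w⟫ ≤
      ‖u - v‖ * (-(lam * ‖u - v‖ * (1 - ‖u - v‖)) + M) := by
  have hc : ⟪v, u⟫ ^ 2 - 1 ≤ -(‖u - v‖ ^ 2 * (1 - ‖u - v‖)) := inner_sq_sub_one_le hu hv
  have hc0 : ⟪v, u⟫ ^ 2 - 1 ≤ 0 := by
    have := abs_real_inner_le_norm v u
    rw [hu, hv, mul_one, ← sq_le_one_iff_abs_le_one] at this
    linarith
  have hKc : K * (⟪v, u⟫ ^ 2 - 1) ≤ lam * (⟪v, u⟫ ^ 2 - 1) :=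
    mul_le_mul_of_nonpos_right hK hc0
  have hw' : -⟪u - v, w⟫ ≤ ‖u - v‖ * M :=
    (neg_le_abs _).trans ((abs_real_inner_le_norm _ _).trans
      (mul_le_mul_of_nonneg_left hw (norm_nonneg _)))
  rw [inner_sub_right, inner_smul_right, inner_sub_sub_inner_smul_of_norm_eq_one hu hv]
  nlinarith [mul_le_mul_of_nonneg_left hc hlam]

end UnitVectors

theorem step1_differential_inequality_general
    {d : ℕ}
    (θ θ' : ℝ → EuclideanSpace ℝ (Fin d))
    (hθ1 : ∀ t ∈ Icc (0 : ℝ) 1, ‖θ t‖ = 1)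
    (hθd : ∀ t ∈ Icc (0 : ℝ) 1, HasDerivAt θ (θ' t) t)
    (hθ'c : ContinuousOn θ' (Icc 0 1))
    (η : ℝ → ℝ → EuclideanSpace ℝ (Fin d)) (ρ : ℝ → ℝ → ℝ)
    (hη1 : ∀ lam > (0 : ℝ), ∀ t ∈ Icc (0 : ℝ) 1, ‖η lam t‖ = 1)
    (hρpos : ∀ lam > (0 : ℝ), ∀ t ∈ Ioc (0 : ℝ) 1, 0 < ρ lam t)
    (hODE : ∀ lam > (0 : ℝ), ∀ t ∈ Ioc (0 : ℝ) 1,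
      HasDerivAt (η lam)
        ((lam * (Real.cosh (ρ lam t) / Real.sinh (ρ lam t))) •
          (θ t - (inner ℝ (θ t) (η lam t) : ℝ) • η lam t)) t ∧
      HasDerivAt (ρ lam) (lam * (inner ℝ (θ t) (η lam t) : ℝ)) t) :
    ∀ lam > (0 : ℝ), ∀ t ∈ Ioc (0 : ℝ) 1,
      deriv (fun s => ‖η lam s - θ s‖ ^ 2) t ≤
        2 * ‖η lam t - θ t‖ *
          (-(lam * ‖η lam t - θ t‖ * (1 - ‖η lam t - θ t‖)) +
            ⨆ s ∈ Icc (0 : ℝ) 1, ‖θ' s‖) := by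
  intro lam hlam t ht
  have htI : t ∈ Icc (0 : ℝ) 1 := Ioc_subset_Icc_self ht
  have hK : lam ≤ lam * (cosh (ρ lam t) / sinh (ρ lam t)) :=
    le_mul_of_one_le_right hlam.le (one_le_cosh_div_sinh (hρpos lam hlam t ht))
  have hM : ‖θ' t‖ ≤ ⨆ s ∈ Icc (0 : ℝ) 1, ‖θ' s‖ :=
    isCompact_Icc.le_biSup_of_continuousOn hθ'c.norm htI
  rw [((hODE lam hlam t ht).1.fun_sub (hθd t htI)).norm_sq.deriv, mul_assoc]
  gcongr
  exact inner_sub_development_field_le (hη1 lam hlam t htI) (hθ1 t htI) hlam.le hK hM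

/-- Setting as in the hyperbolic-development theorems, with `L = 1`:
`θ : [0,1] → S^{d-1}` is C¹ with derivative `θ'`, and for each `lam > 0` the pair
`(η lam, ρ lam)` solves the development ODE system.  Writing `f_lam = η lam − θ`:
for every `lam > 0` and `t ∈ (0,1]` one has the differential inequality
`(d/dt)|f_lam(t)|² ≤ 2 |f_lam(t)| ( −lam |f_lam(t)| (1 − |f_lam(t)|) + sup_{[0,1]}|θ′| )`. -/
theorem step1_differential_inequality
    {d : ℕ} (hd : 0 < d)
    (θ θ' : ℝ → EuclideanSpace ℝ (Fin d))
    (hθ1 : ∀ t ∈ Icc (0 : ℝ) 1, ‖θ t‖ = 1)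
    (hθd : ∀ t ∈ Icc (0 : ℝ) 1, HasDerivAt θ (θ' t) t)
    (hθ'c : ContinuousOn θ' (Icc 0 1))
    (η : ℝ → ℝ → EuclideanSpace ℝ (Fin d)) (ρ : ℝ → ℝ → ℝ)
    (hηc : ∀ lam > (0 : ℝ), ContinuousOn (η lam) (Icc 0 1))
    (hρc : ∀ lam > (0 : ℝ), ContinuousOn (ρ lam) (Icc 0 1))
    (hη1 : ∀ lam > (0 : ℝ), ∀ t ∈ Icc (0 : ℝ) 1, ‖η lam t‖ = 1)
    (hη0 : ∀ lam > (0 : ℝ), η lam 0 = θ 0)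
    (hρ0 : ∀ lam > (0 : ℝ), ρ lam 0 = 0)
    (hρpos : ∀ lam > (0 : ℝ), ∀ t ∈ Ioc (0 : ℝ) 1, 0 < ρ lam t)
    (hODE : ∀ lam > (0 : ℝ), ∀ t ∈ Ioc (0 : ℝ) 1,
      HasDerivAt (η lam)
        ((lam * (Real.cosh (ρ lam t) / Real.sinh (ρ lam t))) •
          (θ t - (inner ℝ (θ t) (η lam t) : ℝ) • η lam t)) t ∧
      HasDerivAt (ρ lam) (lam * (inner ℝ (θ t) (η lam t) : ℝ)) t) :
    ∀ lam > (0 : ℝ), ∀ t ∈ Ioc (0 : ℝ) 1,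
      deriv (fun s => ‖η lam s - θ s‖ ^ 2) t ≤
        2 * ‖η lam t - θ t‖ *
          (-(lam * ‖η lam t - θ t‖ * (1 - ‖η lam t - θ t‖)) +
            ⨆ s ∈ Icc (0 : ℝ) 1, ‖θ' s‖) :=
  step1_differential_inequality_general θ θ' hθ1 hθd hθ'c η ρ hη1 hρpos hODE
end
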